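/- arXiv:2509.01562 — 5 statements merged into one kernel-verified Lean document; each statement's English description precedes it below -/
import Mathlib

section
/- The exponential cone K_exp is a closed subset of ℝ³, and it equals the topological closure of the set {(x₁,x₂,x₃) ∈ ℝ³ : x₂ > 0 and x₁ ≥ x₂·exp(x₃/x₂)}; in particular the half-plane component {(x₁,0,x₃) : x₁ ≥ 0, x₃ ≤ 0} consists exactly of the limit points with x₂ = 0 of the region with x₂ > 0. -/
/-!
Each tangent line `s ↦ eᵗ (s + 1 - t)` of `exp` lies below it, with contact at `s = t`; taking
perspectives, `x₂ exp (x₃ / x₂) = sup_t eᵗ (x₃ + (1 - t) x₂)` for `x₂ > 0`. Hence `K_exp` is the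
intersection of the closed half-spaces `eᵗ (x₃ + (1 - t) x₂) ≤ x₁`: for `x₂ < 0` these fail as
`t → ∞`, and for `x₂ = 0` they say exactly `x₃ ≤ 0 ≤ x₁` (let `t → ±∞`). So `K_exp` is closed, and
each half-plane point `(a, 0, c)` is the limit of the points `(a + ε, ε, c)` with `ε ↓ 0`.
-/

/-- The exponential cone `K_exp ⊆ ℝ³`:
`{(x₁,x₂,x₃) : x₂ > 0 ∧ x₁ ≥ x₂·exp(x₃/x₂)} ∪ {(x₁,0,x₃) : x₁ ≥ 0 ∧ x₃ ≤ 0}`. -/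
def Kexp : Set (ℝ × ℝ × ℝ) :=
  {x | (0 < x.2.1 ∧ x.2.1 * Real.exp (x.2.2 / x.2.1) ≤ x.1) ∨
       (x.2.1 = 0 ∧ 0 ≤ x.1 ∧ x.2.2 ≤ 0)}

open Real Filter Topology Set

theorem Real.exp_mul_add_one_sub_le_exp (s t : ℝ) : exp t * (s + 1 - t) ≤ exp s :=
  calc exp t * (s + 1 - t) = exp t * ((s - t) + 1) := by ring
    _ ≤ exp t * exp (s - t) := by gcongr; exact add_one_le_exp _
    _ = exp s := by rw [← exp_add, add_sub_cancel]

theorem Real.exp_mul_add_one_sub_mul_le_mul_exp_div {b : ℝ} (hb : 0 < b) (c t : ℝ) :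
    exp t * (c + (1 - t) * b) ≤ b * exp (c / b) :=
  calc exp t * (c + (1 - t) * b) = b * (exp t * (c / b + 1 - t)) := by field_simp; ring
    _ ≤ b * exp (c / b) := by gcongr; exact exp_mul_add_one_sub_le_exp _ _

theorem Kexp_eq_iInter :
    Kexp = ⋂ t : ℝ, {x : ℝ × ℝ × ℝ | exp t * (x.2.2 + (1 - t) * x.2.1) ≤ x.1} := by
  ext ⟨a, b, c⟩
  simp only [Kexp, mem_ofPred_eq, mem_iInter]
  constructor
  · rintro (⟨hb, h⟩ | ⟨rfl, ha, hc⟩) t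
    · exact (exp_mul_add_one_sub_mul_le_mul_exp_div hb c t).trans h
    · simpa using (mul_nonpos_of_nonneg_of_nonpos (exp_pos t).le hc).trans ha
  · intro h
    have not_tendsto {f : ℝ → ℝ} (hf : ∀ t, f t ≤ a) (hlim : Tendsto f atTop atTop) : False :=
      let ⟨t, ht⟩ := (hlim.eventually_gt_atTop a).exists
      (hf t).not_gt ht
    rcases lt_trichotomy b 0 with hb | rfl | hb
    · refine (not_tendsto h (tendsto_exp_atTop.atTop_mul_atTop₀ ?_)).elim
      have : Tendsto (fun t : ℝ => (c + b) + -b * t) atTop atTop :=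
        tendsto_atTop_add_const_left _ _ (tendsto_id.const_mul_atTop (neg_pos.2 hb))
      exact this.congr fun t => by ring
    · simp only [mul_zero, add_zero] at h
      have hc : c ≤ 0 := by
        by_contra! hc
        exact not_tendsto h (tendsto_exp_atTop.atTop_mul_const hc)
      have ha : 0 ≤ a := by
        have : Tendsto (fun t => exp t * c) atBot (𝓝 0) := by
          simpa using tendsto_exp_atBot.mul_const c
        exact le_of_tendsto' this h
      exact Or.inr ⟨rfl, ha, hc⟩
    · refine Or.inl ⟨hb, ?_⟩
      have hcb : c + (1 - c / b) * b = b := by field_simp; ring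
      simpa only [hcb, mul_comm (exp _)] using h (c / b)

theorem Kexp_isClosed : IsClosed Kexp := by
  rw [Kexp_eq_iInter]
  exact isClosed_iInter fun t => isClosed_le (by fun_prop) continuous_fst

theorem Kexp_halfplane_mem_closure {a c : ℝ} (ha : 0 ≤ a) (hc : c ≤ 0) :
    (a, 0, c) ∈ closure {x : ℝ × ℝ × ℝ | 0 < x.2.1 ∧ x.2.1 * exp (x.2.2 / x.2.1) ≤ x.1} := by
  have hlim : Tendsto (fun ε : ℝ => (a + ε, ε, c)) (𝓝[>] 0) (𝓝 (a, 0, c)) := by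
    refine tendsto_nhdsWithin_of_tendsto_nhds ?_
    simpa using ((continuous_const.add continuous_id).prodMk
      (continuous_id.prodMk continuous_const)).tendsto (0 : ℝ)
  refine mem_closure_of_tendsto hlim ?_
  filter_upwards [self_mem_nhdsWithin] with ε (hε : 0 < ε)
  refine ⟨hε, ?_⟩
  calc ε * exp (c / ε) ≤ ε * 1 := by
        gcongr; exact exp_le_one_iff.2 (div_nonpos_of_nonpos_of_nonneg hc hε.le)
    _ ≤ a + ε := by linarith

theorem Kexp_eq_closure :
    Kexp = closure {x : ℝ × ℝ × ℝ | 0 < x.2.1 ∧ x.2.1 * exp (x.2.2 / x.2.1) ≤ x.1} := by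
  refine subset_antisymm ?_ (closure_minimal (fun x hx => Or.inl hx) Kexp_isClosed)
  rintro ⟨a, b, c⟩ (h | ⟨rfl, ha, hc⟩)
  · exact subset_closure h
  · exact Kexp_halfplane_mem_closure ha hc

/-- `K_exp` is closed, equals the topological closure of its `x₂ > 0` part, and its
half-plane component `{(x₁,0,x₃) : x₁ ≥ 0, x₃ ≤ 0}` consists exactly of the limit
points with `x₂ = 0` of the region with `x₂ > 0`. -/
theorem Kexp_isClosed_and_eq_closure :
    IsClosed Kexp ∧
    Kexp = closure {x : ℝ × ℝ × ℝ | 0 < x.2.1 ∧ x.2.1 * Real.exp (x.2.2 / x.2.1) ≤ x.1} ∧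
    {x : ℝ × ℝ × ℝ | x.2.1 = 0 ∧ 0 ≤ x.1 ∧ x.2.2 ≤ 0} =
      {x : ℝ × ℝ × ℝ | x.2.1 = 0} ∩
        closure {x : ℝ × ℝ × ℝ | 0 < x.2.1 ∧ x.2.1 * Real.exp (x.2.2 / x.2.1) ≤ x.1} := by
  refine ⟨Kexp_isClosed, Kexp_eq_closure, ?_⟩
  rw [← Kexp_eq_closure]
  ext x
  simp only [Kexp, mem_ofPred_eq, mem_inter_iff]
  constructor
  · rintro ⟨hb, ha, hc⟩
    exact ⟨hb, Or.inr ⟨hb, ha, hc⟩⟩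
  · rintro ⟨hb, ⟨hpos, -⟩ | h⟩
    · exact absurd hb hpos.ne'
    · exact h
end

section
/- The optimal value of the MNL maximum-likelihood problem equals the optimal value of its exponential-cone reformulation: sup_{β∈ℝ^p} L^MNL(β) = sup { ∑_{n=1}^N (⟨β, a_{n j_n}⟩ − t_n) : β ∈ ℝ^p, t ∈ ℝ^N, z with ∑_{j∈S_n} z_{nj} ≤ 1 for all n and z_{nj} ≥ exp(⟨β,a_{nj}⟩ − t_n) for all n and j ∈ S_n } (as an equality in the extended reals). -/
/-!
For each observation, `log ∑ⱼ exp (fⱼ)` is the least `t` with `∑ⱼ exp (fⱼ - t) ≤ 1`, i.e. the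
least `t` admitting a feasible `z`. So every feasible point of the conic problem has objective
at most `L^MNL(β)`, and the choice `tₙ = log ∑ⱼ exp ⟨β, aₙⱼ⟩`, `zₙⱼ = exp (⟨β, aₙⱼ⟩ - tₙ)`
attains it.
-/

open Finset Real

namespace Real

variable {ι : Type*} {s : Finset ι} {f : ι → ℝ}

noncomputable def logSumExp (s : Finset ι) (f : ι → ℝ) : ℝ :=
  log (∑ j ∈ s, exp (f j))

theorem sum_exp_sub_eq_sum_exp_div (s : Finset ι) (f : ι → ℝ) (t : ℝ) :
    ∑ j ∈ s, exp (f j - t) = (∑ j ∈ s, exp (f j)) / exp t := by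
  simp only [exp_sub, ← sum_div]

theorem sum_exp_pos (hs : s.Nonempty) : 0 < ∑ j ∈ s, exp (f j) :=
  sum_pos (fun j _ => exp_pos (f j)) hs

theorem sum_exp_sub_logSumExp (hs : s.Nonempty) :
    ∑ j ∈ s, exp (f j - logSumExp s f) = 1 := by
  rw [sum_exp_sub_eq_sum_exp_div, logSumExp, exp_log (sum_exp_pos hs), div_self (sum_exp_pos hs).ne']

theorem logSumExp_le_iff (hs : s.Nonempty) {t : ℝ} :
    logSumExp s f ≤ t ↔ ∑ j ∈ s, exp (f j - t) ≤ 1 := by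
  rw [logSumExp, log_le_iff_le_exp (sum_exp_pos hs), sum_exp_sub_eq_sum_exp_div,
    div_le_one (exp_pos t)]

theorem logSumExp_le_of_exp_sub_le {z : ι → ℝ} {t : ℝ} (hs : s.Nonempty)
    (hz : ∑ j ∈ s, z j ≤ 1) (hexp : ∀ j ∈ s, exp (f j - t) ≤ z j) :
    logSumExp s f ≤ t :=
  (logSumExp_le_iff hs).2 ((sum_le_sum hexp).trans hz)

end Real

theorem mnl_mle_eq_ecp_value_general (N m p : ℕ)
    (S : Fin N → Finset (Fin m)) (hS : ∀ n, (S n).Nonempty)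
    (jc : Fin N → Fin m)
    (a : Fin N → Fin m → Fin p → ℝ) :
    let dot : (Fin p → ℝ) → (Fin p → ℝ) → ℝ := fun x y => ∑ i, x i * y i
    let LMNL : (Fin p → ℝ) → ℝ := fun β => ∑ n, (dot β (a n (jc n)) -
      Real.log (∑ j ∈ S n, Real.exp (dot β (a n j))))
    sSup {x : EReal | ∃ β : Fin p → ℝ, x = (LMNL β : ℝ)} =
      sSup {x : EReal |
        ∃ (β : Fin p → ℝ) (t : Fin N → ℝ) (z : Fin N → Fin m → ℝ),
          (∀ n, ∑ j ∈ S n, z n j ≤ 1) ∧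
          (∀ n, ∀ j ∈ S n, z n j ≥ Real.exp (dot β (a n j) - t n)) ∧
          x = ((∑ n, (dot β (a n (jc n)) - t n) : ℝ) : EReal)} := by
  intro dot LMNL
  apply le_antisymm
  · refine sSup_le_sSup ?_
    rintro x ⟨β, rfl⟩
    let t n := logSumExp (S n) (fun j => dot β (a n j))
    refine ⟨β, t, fun n j => exp (dot β (a n j) - t n),
      fun n => (sum_exp_sub_logSumExp (hS n)).le, fun n j _ => le_rfl, rfl⟩
  · refine sSup_le_sSup_of_isCofinalFor ?_
    rintro x ⟨β, t, z, hz, hexp, rfl⟩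
    refine ⟨LMNL β, ⟨β, rfl⟩, EReal.coe_le_coe_iff.2 (sum_le_sum fun n _ => ?_)⟩
    have : logSumExp (S n) (fun j => dot β (a n j)) ≤ t n :=
      logSumExp_le_of_exp_sub_le (hS n) (hz n) (hexp n)
    exact sub_le_sub_left this _

/-- The optimal value of the MNL maximum-likelihood problem equals the optimal value
of its exponential-cone reformulation (as an equality in the extended reals). -/
theorem mnl_mle_eq_ecp_value (N m p : ℕ)
    (S : Fin N → Finset (Fin m)) (hS : ∀ n, (S n).Nonempty)
    (jc : Fin N → Fin m) (hjc : ∀ n, jc n ∈ S n)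
    (a : Fin N → Fin m → Fin p → ℝ) :
    let dot : (Fin p → ℝ) → (Fin p → ℝ) → ℝ := fun x y => ∑ i, x i * y i
    let LMNL : (Fin p → ℝ) → ℝ := fun β => ∑ n, (dot β (a n (jc n)) -
      Real.log (∑ j ∈ S n, Real.exp (dot β (a n j))))
    sSup {x : EReal | ∃ β : Fin p → ℝ, x = (LMNL β : ℝ)} =
      sSup {x : EReal |
        ∃ (β : Fin p → ℝ) (t : Fin N → ℝ) (z : Fin N → Fin m → ℝ),
          (∀ n, ∑ j ∈ S n, z n j ≤ 1) ∧
          (∀ n, ∀ j ∈ S n, z n j ≥ Real.exp (dot β (a n j) - t n)) ∧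
          x = ((∑ n, (dot β (a n (jc n)) - t n) : ℝ) : EReal)} :=
  mnl_mle_eq_ecp_value_general N m p S hS jc a
end

section
/- For every fixed vector of scale parameters λ with λ_l ∈ (0,1] for all l ∈ {1,…,L}, the nested logit log-likelihood β ↦ L^NL(β,λ) is a concave function on ℝ^p. -/
/-!
Each observation contributes a concave function of `β`. Its inclusive value `W_{nl}` is a sum of
exponentials of linear functions, and `log ∑ᵢ exp fᵢ` is convex whenever the `fᵢ` are (Hölder's
inequality), so `log W_{nl}` is convex and `(λ - 1) log W_{nl}` is concave for `λ ≤ 1`. The chosen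
utility is linear, and `log ∑_l W_{nl}^{λ_l} = log ∑_l exp (λ_l log W_{nl})` is again a
log-sum-exp of convex functions.
-/

open Finset Real

theorem Finset.sum_rpow_mul_rpow_le {ι : Type*} (s : Finset ι) {u v : ι → ℝ}
    (hu : ∀ i ∈ s, 0 ≤ u i) (hv : ∀ i ∈ s, 0 ≤ v i) {a b : ℝ} (ha : 0 < a) (hb : 0 < b)
    (hab : a + b = 1) :
    ∑ i ∈ s, u i ^ a * v i ^ b ≤ (∑ i ∈ s, u i) ^ a * (∑ i ∈ s, v i) ^ b := by
  have hpow : ∀ {w : ι → ℝ} {c : ℝ}, 0 < c → (∀ i ∈ s, 0 ≤ w i) →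
      ∑ i ∈ s, (w i ^ c) ^ (1 / c) = ∑ i ∈ s, w i := fun hc hw =>
    sum_congr rfl fun i hi => by rw [← rpow_mul (hw i hi), mul_one_div_cancel hc.ne', rpow_one]
  simpa only [hpow ha hu, hpow hb hv, one_div_one_div] using
    inner_le_Lp_mul_Lq_of_nonneg s (holderConjugate_one_div ha hb hab)
      (fun i hi => rpow_nonneg (hu i hi) a) (fun i hi => rpow_nonneg (hv i hi) b)

theorem concaveOn_sum {𝕜 E β ι : Type*} [Semiring 𝕜] [PartialOrder 𝕜] [AddCommMonoid E]
    [SMul 𝕜 E] [AddCommMonoid β] [PartialOrder β] [IsOrderedAddMonoid β] [Module 𝕜 β]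
    {s : Set E} (hs : Convex 𝕜 s) (t : Finset ι) {f : ι → E → β}
    (hf : ∀ i ∈ t, ConcaveOn 𝕜 s (f i)) : ConcaveOn 𝕜 s (fun x => ∑ i ∈ t, f i x) := by
  classical
  induction t using Finset.induction with
  | empty => simpa using concaveOn_const 0 hs
  | insert j t hj ih =>
    simp only [sum_insert hj]
    exact (hf j (mem_insert_self j t)).add (ih fun i hi => hf i (mem_insert_of_mem hi))

section LogSumExp

variable {E ι : Type*} [AddCommGroup E] [Module ℝ E] {s : Set E} {t : Finset ι}

theorem convexOn_log_sum_exp (ht : t.Nonempty) {f : ι → E → ℝ}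
    (hf : ∀ i ∈ t, ConvexOn ℝ s (f i)) :
    ConvexOn ℝ s (fun x => log (∑ i ∈ t, exp (f i x))) := by
  obtain ⟨i₀, hi₀⟩ := ht
  refine convexOn_iff_forall_pos.2 ⟨(hf i₀ hi₀).1, fun x hx y hy a b ha hb hab => ?_⟩
  have hpos : ∀ z, 0 < ∑ i ∈ t, exp (f i z) := fun z => sum_pos (fun i _ => exp_pos _) ⟨i₀, hi₀⟩
  have key : ∑ i ∈ t, exp (f i (a • x + b • y))
      ≤ (∑ i ∈ t, exp (f i x)) ^ a * (∑ i ∈ t, exp (f i y)) ^ b :=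
    calc ∑ i ∈ t, exp (f i (a • x + b • y))
        ≤ ∑ i ∈ t, exp (f i x) ^ a * exp (f i y) ^ b := sum_le_sum fun i hi => by
          rw [← exp_mul, ← exp_mul, ← exp_add, mul_comm _ a, mul_comm _ b]
          exact exp_le_exp.2 ((hf i hi).2 hx hy ha.le hb.le hab)
      _ ≤ _ := sum_rpow_mul_rpow_le t (fun i _ => (exp_pos _).le) (fun i _ => (exp_pos _).le)
          ha hb hab
  calc log (∑ i ∈ t, exp (f i (a • x + b • y)))
      ≤ log ((∑ i ∈ t, exp (f i x)) ^ a * (∑ i ∈ t, exp (f i y)) ^ b) :=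
        log_le_log (hpos _) key
    _ = a • log (∑ i ∈ t, exp (f i x)) + b • log (∑ i ∈ t, exp (f i y)) := by
        rw [log_mul (rpow_pos_of_pos (hpos x) a).ne' (rpow_pos_of_pos (hpos y) b).ne',
          log_rpow (hpos x), log_rpow (hpos y), smul_eq_mul, smul_eq_mul]

theorem convexOn_log_sum_rpow (ht : t.Nonempty) {g : ι → E → ℝ} {w : ι → ℝ}
    (hg : ∀ i ∈ t, ∀ x ∈ s, 0 < g i x) (hw : ∀ i ∈ t, 0 ≤ w i)
    (hlog : ∀ i ∈ t, ConvexOn ℝ s (fun x => log (g i x))) :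
    ConvexOn ℝ s (fun x => log (∑ i ∈ t, g i x ^ w i)) :=
  (convexOn_log_sum_exp ht fun i hi => (hlog i hi).smul (hw i hi)).congr fun x hx => by
    simp only [smul_eq_mul]
    exact congrArg log (sum_congr rfl fun i hi => by rw [rpow_def_of_pos (hg i hi x hx), mul_comm])

end LogSumExp

theorem concaveOn_dotProduct_div {ι : Type*} [Fintype ι] {s : Set (ι → ℝ)} (hs : Convex ℝ s)
    (c : ι → ℝ) (r : ℝ) : ConcaveOn ℝ s (fun x => x ⬝ᵥ c / r) :=
  ((r⁻¹ • (dotProductBilin ℝ ℝ).flip c).concaveOn hs).congr fun x _ => by simp [div_eq_inv_mul]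

theorem convexOn_dotProduct_div {ι : Type*} [Fintype ι] {s : Set (ι → ℝ)} (hs : Convex ℝ s)
    (c : ι → ℝ) (r : ℝ) : ConvexOn ℝ s (fun x => x ⬝ᵥ c / r) :=
  ((r⁻¹ • (dotProductBilin ℝ ℝ).flip c).convexOn hs).congr fun x _ => by simp [div_eq_inv_mul]

theorem nl_loglikelihood_concaveOn_general (m L N p : ℕ)
    (Nl : Fin L → Finset (Fin m))
    (S : Fin N → Finset (Fin m)) (hS : ∀ n l, ((Nl l) ∩ S n).Nonempty)
    (a : Fin N → Fin m → Fin p → ℝ)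
    (lam : Fin L → ℝ) (hlam : ∀ l, 0 < lam l ∧ lam l ≤ 1)
    (jc : Fin N → Fin m)
    (ln : Fin N → Fin L) :
    ConcaveOn ℝ Set.univ
      (fun β : Fin p → ℝ =>
        let dot : (Fin p → ℝ) → (Fin p → ℝ) → ℝ := fun x y => ∑ i, x i * y i
        let W : Fin N → Fin L → ℝ := fun n l =>
          ∑ j ∈ Nl l ∩ S n, Real.exp (dot β (a n j) / lam l)
        ∑ n, ((lam (ln n) - 1) * Real.log (W n (ln n)) +
          dot β (a n (jc n)) / lam (ln n) -
          Real.log (∑ l', W n l' ^ lam l'))) := by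
  set W : Fin N → Fin L → (Fin p → ℝ) → ℝ := fun n l β =>
    ∑ j ∈ Nl l ∩ S n, exp (β ⬝ᵥ a n j / lam l)
  have hW_pos : ∀ n l β, 0 < W n l β := fun n l _ => sum_pos (fun _ _ => exp_pos _) (hS n l)
  have hlogW : ∀ n l, ConvexOn ℝ Set.univ fun β => log (W n l β) := fun n l =>
    convexOn_log_sum_exp (hS n l) fun j _ => convexOn_dotProduct_div convex_univ (a n j) (lam l)
  show ConcaveOn ℝ Set.univ fun β => ∑ n, ((lam (ln n) - 1) * log (W n (ln n) β) +
    β ⬝ᵥ a n (jc n) / lam (ln n) - log (∑ l', W n l' β ^ lam l'))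
  refine concaveOn_sum convex_univ univ fun n _ => ?_
  have hnest : ConcaveOn ℝ Set.univ fun β => (lam (ln n) - 1) * log (W n (ln n) β) :=
    ((hlogW n (ln n)).smul (sub_nonneg.2 (hlam (ln n)).2)).neg.congr fun β _ => by
      simp only [Pi.neg_apply, smul_eq_mul]; ring
  have hchosen := concaveOn_dotProduct_div convex_univ (a n (jc n)) (lam (ln n))
  have hinclusive : ConvexOn ℝ Set.univ fun β => log (∑ l', W n l' β ^ lam l') :=
    convexOn_log_sum_rpow ⟨ln n, mem_univ _⟩ (fun l _ β _ => hW_pos n l β)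
      (fun l _ => (hlam l).1.le) fun l _ => hlogW n l
  exact (hnest.add hchosen).sub hinclusive

/-- For every fixed vector of scale parameters `λ ∈ (0,1]^L`, the nested logit
log-likelihood `β ↦ L^NL(β,λ)` is concave on `ℝ^p`, where
`L^NL(β,λ) = ∑_n [(λ_{l_n}−1)·log W_{n l_n}(β) + ⟨β,a_{n j_n}⟩/λ_{l_n}
             − log (∑_{l'} W_{n l'}(β)^{λ_{l'}})]`
and `W_{nl}(β) = ∑_{j∈N_l∩S_n} exp(⟨β,a_{nj}⟩/λ_l)`. -/
theorem nl_loglikelihood_concaveOn (m L N p : ℕ)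
    (Nl : Fin L → Finset (Fin m))
    (hdisj : ∀ l l' : Fin L, l ≠ l' → Disjoint (Nl l) (Nl l'))
    (hpart : ∀ i : Fin m, ∃ l, i ∈ Nl l)
    (hne : ∀ l, (Nl l).Nonempty)
    (S : Fin N → Finset (Fin m)) (hS : ∀ n l, ((Nl l) ∩ S n).Nonempty)
    (a : Fin N → Fin m → Fin p → ℝ)
    (lam : Fin L → ℝ) (hlam : ∀ l, 0 < lam l ∧ lam l ≤ 1)
    (jc : Fin N → Fin m) (hjc : ∀ n, jc n ∈ S n)
    (ln : Fin N → Fin L) (hln : ∀ n, jc n ∈ Nl (ln n)) :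
    ConcaveOn ℝ Set.univ
      (fun β : Fin p → ℝ =>
        let dot : (Fin p → ℝ) → (Fin p → ℝ) → ℝ := fun x y => ∑ i, x i * y i
        let W : Fin N → Fin L → ℝ := fun n l =>
          ∑ j ∈ Nl l ∩ S n, Real.exp (dot β (a n j) / lam l)
        ∑ n, ((lam (ln n) - 1) * Real.log (W n (ln n)) +
          dot β (a n (jc n)) / lam (ln n) -
          Real.log (∑ l', W n l' ^ lam l'))) :=
  nl_loglikelihood_concaveOn_general m L N p Nl S hS a lam hlam jc ln
end

section
/- Fix β ∈ ℝ^p and λ ∈ (0,1]^L. Over all z = (z_{nl}) ∈ ℝ^{N×L} and y = (y_n) ∈ ℝ^N satisfying z_{nl} ≥ log(∑_{j∈N_l∩S_n} exp(⟨β,a_{nj}⟩/λ_l)) for every n and l, and y_n ≥ log(∑_{l'=1}^L exp(λ_{l'}·z_{n l'})) for every n, the supremum of ∑_{n=1}^N [(λ_{l_n}−1)·z_{n l_n} + ⟨β,a_{n j_n}⟩/λ_{l_n} − y_n] equals L^NL(β,λ), and it is attained when both families of inequalities hold with equality. -/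
/-!
Each constraint is a lower bound on a variable that enters the objective with a nonpositive
coefficient: `z_{n l_n}` with coefficient `λ_{l_n} - 1 ≤ 0`, and `y_n` with coefficient `-1`.
Moreover the lower bound for `y_n` is monotone in `z`, since `λ > 0`. Hence the objective is
maximised by taking every constraint with equality, and there `exp (λ_l · log W_{nl}) = W_{nl}^{λ_l}`
turns the objective into `L^NL(β,λ)`.
-/

open Finset Real

theorem Real.log_sum_le_log_sum {ι : Type*} {s : Finset ι} {f g : ι → ℝ}
    (hf : ∀ i ∈ s, 0 < f i) (hfg : ∀ i ∈ s, f i ≤ g i) :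
    log (∑ i ∈ s, f i) ≤ log (∑ i ∈ s, g i) := by
  rcases s.eq_empty_or_nonempty with rfl | hs
  · simp
  exact log_le_log (sum_pos hf hs) (sum_le_sum hfg)

theorem Real.log_sum_rpow_le_log_sum_exp {ι : Type*} {s : Finset ι} {w t z : ι → ℝ}
    (hw : ∀ i ∈ s, 0 < w i) (ht : ∀ i ∈ s, 0 ≤ t i) (hz : ∀ i ∈ s, log (w i) ≤ z i) :
    log (∑ i ∈ s, w i ^ t i) ≤ log (∑ i ∈ s, exp (t i * z i)) := by
  refine log_sum_le_log_sum (fun i hi => rpow_pos_of_pos (hw i hi) _) fun i hi => ?_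
  rw [rpow_def_of_pos (hw i hi), mul_comm]
  exact exp_le_exp.2 (mul_le_mul_of_nonneg_left (hz i hi) (ht i hi))

theorem nl_ecp_fixed_beta_general (m L N p : ℕ)
    (Nl : Fin L → Finset (Fin m))
    (S : Fin N → Finset (Fin m)) (hS : ∀ n l, ((Nl l) ∩ S n).Nonempty)
    (a : Fin N → Fin m → Fin p → ℝ)
    (lam : Fin L → ℝ) (hlam : ∀ l, 0 < lam l ∧ lam l ≤ 1)
    (jc : Fin N → Fin m)
    (ln : Fin N → Fin L)
    (β : Fin p → ℝ) :
    let dot : (Fin p → ℝ) → (Fin p → ℝ) → ℝ := fun x y => ∑ i, x i * y i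
    let W : Fin N → Fin L → ℝ := fun n l =>
      ∑ j ∈ Nl l ∩ S n, Real.exp (dot β (a n j) / lam l)
    let LNL : ℝ := ∑ n, ((lam (ln n) - 1) * Real.log (W n (ln n)) +
      dot β (a n (jc n)) / lam (ln n) - Real.log (∑ l', W n l' ^ lam l'))
    let Feasible : (Fin N → Fin L → ℝ) → (Fin N → ℝ) → Prop := fun z y =>
      (∀ n l, z n l ≥ Real.log (W n l)) ∧
      (∀ n, y n ≥ Real.log (∑ l', Real.exp (lam l' * z n l')))
    let obj : (Fin N → Fin L → ℝ) → (Fin N → ℝ) → ℝ := fun z y =>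
      ∑ n, ((lam (ln n) - 1) * z n (ln n) + dot β (a n (jc n)) / lam (ln n) - y n)
    let zstar : Fin N → Fin L → ℝ := fun n l => Real.log (W n l)
    let ystar : Fin N → ℝ := fun n =>
      Real.log (∑ l', Real.exp (lam l' * zstar n l'))
    Feasible zstar ystar ∧ obj zstar ystar = LNL ∧
      ∀ z y, Feasible z y → obj z y ≤ LNL := by
  intro dot W LNL Feasible obj zstar ystar
  have hW : ∀ n l, 0 < W n l := fun n l => sum_pos (fun _ _ => exp_pos _) (hS n l)
  have hystar : ∀ n, ystar n = log (∑ l', W n l' ^ lam l') := fun n => by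
    refine congrArg log (sum_congr rfl fun l _ => ?_)
    rw [rpow_def_of_pos (hW n l), mul_comm]
  refine ⟨⟨fun _ _ => le_rfl, fun _ => le_rfl⟩, sum_congr rfl fun n _ => by rw [hystar n], ?_⟩
  rintro z y ⟨hz, hy⟩
  refine sum_le_sum fun n _ => ?_
  have hzn : (lam (ln n) - 1) * z n (ln n) ≤ (lam (ln n) - 1) * log (W n (ln n)) :=
    mul_le_mul_of_nonpos_left (hz n (ln n)) (sub_nonpos.2 (hlam (ln n)).2)
  have hyn : log (∑ l', W n l' ^ lam l') ≤ y n :=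
    (log_sum_rpow_le_log_sum_exp (fun l _ => hW n l) (fun l _ => (hlam l).1.le)
      fun l _ => hz n l).trans (hy n)
  linarith

/-- Fix `β` and `λ ∈ (0,1]^L`. Over all `(z, y)` with
`z_{nl} ≥ log W_{nl}(β)` and `y_n ≥ log (∑_{l'} exp (λ_{l'}·z_{n l'}))`, the supremum
of `∑_n [(λ_{l_n}−1)·z_{n l_n} + ⟨β,a_{n j_n}⟩/λ_{l_n} − y_n]` equals `L^NL(β,λ)`,
and it is attained when both families of inequalities hold with equality. -/
theorem nl_ecp_fixed_beta (m L N p : ℕ)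
    (Nl : Fin L → Finset (Fin m))
    (hdisj : ∀ l l' : Fin L, l ≠ l' → Disjoint (Nl l) (Nl l'))
    (hpart : ∀ i : Fin m, ∃ l, i ∈ Nl l)
    (hne : ∀ l, (Nl l).Nonempty)
    (S : Fin N → Finset (Fin m)) (hS : ∀ n l, ((Nl l) ∩ S n).Nonempty)
    (a : Fin N → Fin m → Fin p → ℝ)
    (lam : Fin L → ℝ) (hlam : ∀ l, 0 < lam l ∧ lam l ≤ 1)
    (jc : Fin N → Fin m) (hjc : ∀ n, jc n ∈ S n)
    (ln : Fin N → Fin L) (hln : ∀ n, jc n ∈ Nl (ln n))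
    (β : Fin p → ℝ) :
    let dot : (Fin p → ℝ) → (Fin p → ℝ) → ℝ := fun x y => ∑ i, x i * y i
    let W : Fin N → Fin L → ℝ := fun n l =>
      ∑ j ∈ Nl l ∩ S n, Real.exp (dot β (a n j) / lam l)
    let LNL : ℝ := ∑ n, ((lam (ln n) - 1) * Real.log (W n (ln n)) +
      dot β (a n (jc n)) / lam (ln n) - Real.log (∑ l', W n l' ^ lam l'))
    let Feasible : (Fin N → Fin L → ℝ) → (Fin N → ℝ) → Prop := fun z y =>
      (∀ n l, z n l ≥ Real.log (W n l)) ∧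
      (∀ n, y n ≥ Real.log (∑ l', Real.exp (lam l' * z n l')))
    let obj : (Fin N → Fin L → ℝ) → (Fin N → ℝ) → ℝ := fun z y =>
      ∑ n, ((lam (ln n) - 1) * z n (ln n) + dot β (a n (jc n)) / lam (ln n) - y n)
    let zstar : Fin N → Fin L → ℝ := fun n l => Real.log (W n l)
    let ystar : Fin N → ℝ := fun n =>
      Real.log (∑ l', Real.exp (lam l' * zstar n l'))
    Feasible zstar ystar ∧ obj zstar ystar = LNL ∧
      ∀ z y, Feasible z y → obj z y ≤ LNL :=
  nl_ecp_fixed_beta_general m L N p Nl S hS a lam hlam jc ln β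
end

section
/- Fix λ ∈ (0,1]^L. The optimal value of the nested logit maximum-likelihood problem over β equals the optimal value of its exponential-cone reformulation: sup_{β∈ℝ^p} L^NL(β,λ) = sup { ∑_{n=1}^N [(λ_{l_n}−1)·z_{n l_n} + ⟨β,a_{n j_n}⟩/λ_{l_n} − y_n] } over all β ∈ ℝ^p, z ∈ ℝ^{N×L}, y ∈ ℝ^N, k = (k_{njl}) and h = (h_{nl}) satisfying, for all n, l and j ∈ N_l ∩ S_n: ∑_{j∈N_l∩S_n} k_{njl} ≤ 1, k_{njl} ≥ exp(⟨β,a_{nj}⟩/λ_l − z_{nl}), ∑_{l=1}^L h_{nl} ≤ 1, and h_{nl} ≥ exp(λ_l·z_{nl} − y_n) (as an equality in the extended reals). -/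
/-!
The exponential-cone constraints are epigraph descriptions of log-sum-exp: for a nonempty
finite family, `∑ exp (x j - z) ≤ 1` holds exactly when `log ∑ exp (x j) ≤ z`, with equality at
`z = log ∑ exp (x j)`. Hence every feasible point has `z n l ≥ log W n l` and
`y n ≥ log ∑ exp (λ_l z n l) ≥ log ∑ W n l ^ λ_l`, and since `λ - 1 ≤ 0` its objective is at
most the likelihood at the same `β`; conversely `z = log W`, `y = log ∑ W ^ λ` with the
corresponding `k`, `h` is feasible and attains the likelihood.
-/

open Finset Real

namespace Real

variable {ι : Type*} {s : Finset ι}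

theorem sum_exp_sub_le_one_iff (hs : s.Nonempty) (x : ι → ℝ) (z : ℝ) :
    ∑ j ∈ s, exp (x j - z) ≤ 1 ↔ log (∑ j ∈ s, exp (x j)) ≤ z := by
  have hpos : 0 < ∑ j ∈ s, exp (x j) := sum_pos (fun j _ => exp_pos _) hs
  simp_rw [exp_sub, ← sum_div]
  rw [div_le_one (exp_pos z), log_le_iff_le_exp hpos]

theorem sum_exp_sub_log_sum_exp (hs : s.Nonempty) (x : ι → ℝ) :
    ∑ j ∈ s, exp (x j - log (∑ j ∈ s, exp (x j))) = 1 := by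
  have hpos : 0 < ∑ j ∈ s, exp (x j) := sum_pos (fun j _ => exp_pos _) hs
  simp_rw [exp_sub, ← sum_div, exp_log hpos]
  exact div_self hpos.ne'

theorem log_sum_rpow_le_of_sum_exp_sub_le_one {κ : Type*} [Fintype κ] [Nonempty κ]
    {W lam z : κ → ℝ} {y : ℝ} (hW : ∀ l, 0 < W l) (hlam : ∀ l, 0 ≤ lam l)
    (hz : ∀ l, log (W l) ≤ z l) (hy : ∑ l, exp (lam l * z l - y) ≤ 1) :
    log (∑ l, W l ^ lam l) ≤ y := by
  have hle : ∑ l, W l ^ lam l ≤ ∑ l, exp (lam l * z l) := sum_le_sum fun l _ => by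
    rw [rpow_def_of_pos (hW l), mul_comm]
    exact exp_le_exp.mpr (mul_le_mul_of_nonneg_left (hz l) (hlam l))
  have hpos : 0 < ∑ l, W l ^ lam l := sum_pos (fun l _ => rpow_pos_of_pos (hW l) _) univ_nonempty
  exact (log_le_log hpos hle).trans ((sum_exp_sub_le_one_iff univ_nonempty _ y).mp hy)

theorem sum_exp_mul_log_sub_log_sum_rpow {κ : Type*} [Fintype κ] [Nonempty κ]
    {W : κ → ℝ} (hW : ∀ l, 0 < W l) (lam : κ → ℝ) :
    ∑ l, exp (lam l * log (W l) - log (∑ l, W l ^ lam l)) = 1 := by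
  have hrpow : ∀ l, W l ^ lam l = exp (lam l * log (W l)) := fun l => by
    rw [rpow_def_of_pos (hW l), mul_comm]
  simp_rw [hrpow]
  exact sum_exp_sub_log_sum_exp univ_nonempty _

end Real

theorem nl_mle_eq_ecp_value_general (m L N p : ℕ)
    (Nl : Fin L → Finset (Fin m))
    (S : Fin N → Finset (Fin m)) (hS : ∀ n l, ((Nl l) ∩ S n).Nonempty)
    (a : Fin N → Fin m → Fin p → ℝ)
    (lam : Fin L → ℝ) (hlam : ∀ l, 0 < lam l ∧ lam l ≤ 1)
    (jc : Fin N → Fin m)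
    (ln : Fin N → Fin L) :
    let dot : (Fin p → ℝ) → (Fin p → ℝ) → ℝ := fun x y => ∑ i, x i * y i
    let W : (Fin p → ℝ) → Fin N → Fin L → ℝ := fun β n l =>
      ∑ j ∈ Nl l ∩ S n, Real.exp (dot β (a n j) / lam l)
    let LNL : (Fin p → ℝ) → ℝ := fun β =>
      ∑ n, ((lam (ln n) - 1) * Real.log (W β n (ln n)) +
        dot β (a n (jc n)) / lam (ln n) - Real.log (∑ l', W β n l' ^ lam l'))
    sSup {x : EReal | ∃ β : Fin p → ℝ, x = (LNL β : ℝ)} =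
      sSup {x : EReal |
        ∃ (β : Fin p → ℝ) (z : Fin N → Fin L → ℝ) (y : Fin N → ℝ)
          (k : Fin N → Fin m → Fin L → ℝ) (h : Fin N → Fin L → ℝ),
          (∀ n l, ∑ j ∈ Nl l ∩ S n, k n j l ≤ 1) ∧
          (∀ n l, ∀ j ∈ Nl l ∩ S n,
            k n j l ≥ Real.exp (dot β (a n j) / lam l - z n l)) ∧
          (∀ n, ∑ l, h n l ≤ 1) ∧
          (∀ n l, h n l ≥ Real.exp (lam l * z n l - y n)) ∧
          x = ((∑ n, ((lam (ln n) - 1) * z n (ln n) +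
            dot β (a n (jc n)) / lam (ln n) - y n) : ℝ) : EReal)} := by
  intro dot W LNL
  have hW : ∀ β n l, 0 < W β n l := fun β n l => sum_pos (fun j _ => exp_pos _) (hS n l)
  refine le_antisymm (sSup_le_sSup ?_) (sSup_le_sSup_of_isCofinalFor ?_)
  · rintro _ ⟨β, rfl⟩
    refine ⟨β, fun n l => log (W β n l), fun n => log (∑ l', W β n l' ^ lam l'),
      fun n j l => exp (dot β (a n j) / lam l - log (W β n l)),
      fun n l => exp (lam l * log (W β n l) - log (∑ l', W β n l' ^ lam l')),
      fun n l => (sum_exp_sub_log_sum_exp (hS n l) _).le, fun _ _ _ _ => le_rfl,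
      fun n => ?_, fun _ _ => le_rfl, rfl⟩
    have : Nonempty (Fin L) := ⟨ln n⟩
    exact (sum_exp_mul_log_sub_log_sum_rpow (hW β n) lam).le
  · rintro _ ⟨β, z, y, k, h, hk, hkz, hh, hhy, rfl⟩
    refine ⟨_, ⟨β, rfl⟩, EReal.coe_le_coe_iff.mpr (sum_le_sum fun n _ => ?_)⟩
    have : Nonempty (Fin L) := ⟨ln n⟩
    have hz : ∀ l, log (W β n l) ≤ z n l := fun l =>
      (sum_exp_sub_le_one_iff (hS n l) _ _).mp
        ((sum_le_sum fun j hj => hkz n l j hj).trans (hk n l))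
    have hy : log (∑ l', W β n l' ^ lam l') ≤ y n :=
      log_sum_rpow_le_of_sum_exp_sub_le_one (hW β n) (fun l => (hlam l).1.le) hz
        ((sum_le_sum fun l _ => hhy n l).trans (hh n))
    have hobj : (lam (ln n) - 1) * z n (ln n) ≤ (lam (ln n) - 1) * log (W β n (ln n)) :=
      mul_le_mul_of_nonpos_left (hz (ln n)) (by linarith [(hlam (ln n)).2])
    linarith

/-- Fix `λ ∈ (0,1]^L`. The optimal value of the nested logit maximum-likelihood
problem over `β` equals the optimal value of its exponential-cone reformulation
(as an equality in the extended reals). -/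
theorem nl_mle_eq_ecp_value (m L N p : ℕ)
    (Nl : Fin L → Finset (Fin m))
    (hdisj : ∀ l l' : Fin L, l ≠ l' → Disjoint (Nl l) (Nl l'))
    (hpart : ∀ i : Fin m, ∃ l, i ∈ Nl l)
    (hne : ∀ l, (Nl l).Nonempty)
    (S : Fin N → Finset (Fin m)) (hS : ∀ n l, ((Nl l) ∩ S n).Nonempty)
    (a : Fin N → Fin m → Fin p → ℝ)
    (lam : Fin L → ℝ) (hlam : ∀ l, 0 < lam l ∧ lam l ≤ 1)
    (jc : Fin N → Fin m) (hjc : ∀ n, jc n ∈ S n)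
    (ln : Fin N → Fin L) (hln : ∀ n, jc n ∈ Nl (ln n)) :
    let dot : (Fin p → ℝ) → (Fin p → ℝ) → ℝ := fun x y => ∑ i, x i * y i
    let W : (Fin p → ℝ) → Fin N → Fin L → ℝ := fun β n l =>
      ∑ j ∈ Nl l ∩ S n, Real.exp (dot β (a n j) / lam l)
    let LNL : (Fin p → ℝ) → ℝ := fun β =>
      ∑ n, ((lam (ln n) - 1) * Real.log (W β n (ln n)) +
        dot β (a n (jc n)) / lam (ln n) - Real.log (∑ l', W β n l' ^ lam l'))
    sSup {x : EReal | ∃ β : Fin p → ℝ, x = (LNL β : ℝ)} =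
      sSup {x : EReal |
        ∃ (β : Fin p → ℝ) (z : Fin N → Fin L → ℝ) (y : Fin N → ℝ)
          (k : Fin N → Fin m → Fin L → ℝ) (h : Fin N → Fin L → ℝ),
          (∀ n l, ∑ j ∈ Nl l ∩ S n, k n j l ≤ 1) ∧
          (∀ n l, ∀ j ∈ Nl l ∩ S n,
            k n j l ≥ Real.exp (dot β (a n j) / lam l - z n l)) ∧
          (∀ n, ∑ l, h n l ≤ 1) ∧
          (∀ n l, h n l ≥ Real.exp (lam l * z n l - y n)) ∧
          x = ((∑ n, ((lam (ln n) - 1) * z n (ln n) +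
            dot β (a n (jc n)) / lam (ln n) - y n) : ℝ) : EReal)} :=
  nl_mle_eq_ecp_value_general m L N p Nl S hS a lam hlam jc ln
end
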